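/- Let X = {P₁,...,Pₛ} ⊆ kⁿ and let O be a quasi order ideal whose residue classes form a basis of k[x]/I(X). Let Y ⊆ X with |Y| = i and let O_i ⊆ O be a quasi order ideal with |O_i| = i whose residue classes form a basis of k[x]/I(Y). Then for every monomial m ∈ ∂O_i ∩ O there exists a point P ∈ X \ Y such that the residue classes of O_i ∪ {m} form a basis of k[x]/I(Y ∪ {P}). -/

import Mathlib

open MvPolynomial

variable {k : Type*} [Field k] {n : ℕ} [DecidableEq (Fin n → k)]

noncomputable def borderF (S : Finset (Fin n →₀ ℕ)) : Finset (Fin n →₀ ℕ) :=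
  (S.biUnion fun s => (Finset.univ : Finset (Fin n)).image fun i => s + Finsupp.single i 1) \ S

def isQuasiOrderIdeal (O : Finset (Fin n →₀ ℕ)) : Prop :=
  ∀ t ∈ O, t ≠ 0 → t ∈ borderF (O.erase t)

def supportsBasis (I : Ideal (MvPolynomial (Fin n) k)) (O : Finset (Fin n →₀ ℕ)) : Prop :=
  LinearIndependent k (fun t : O => Ideal.Quotient.mk I (monomial t.1 (1 : k))) ∧
  Submodule.span k (Set.range fun t : O => Ideal.Quotient.mk I (monomial t.1 (1 : k))) = ⊤

/-!
Write `m ≡ y` modulo `I(Y)` with `y` in the span of `Oi`, and put `g = m - y`. Then `g ∈ I(Y)`,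
but `g ∉ I(X)` because the classes of `O ⊇ Oi ∪ {m}` are independent modulo `I(X)`; so
`g(P) ≠ 0` for some `P ∈ X \ Y`. A relation among `Oi ∪ {m}` modulo `I(Y ∪ {P})` is also one
modulo `I(Y)`, which forces it to be a multiple of `g`, and `g(P) ≠ 0` kills it. Independence
plus `dim k[x]/I(Y ∪ {P}) = |Y| + 1 = |Oi ∪ {m}|` gives a basis.
-/

section QuotientSpan

variable {A ι : Type*} [CommRing A] [Algebra k A] {I J : Ideal A} {f : ι → A} {s : Set ι}
  {a : ι} {y : A}

theorem span_image_mk_eq_map (I : Ideal A) (f : ι → A) (s : Set ι) :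
    Submodule.span k ((fun i => Ideal.Quotient.mk I (f i)) '' s) =
      (Submodule.span k (f '' s)).map (Ideal.Quotient.mkₐ k I).toLinearMap := by
  rw [Submodule.map_span, Set.image_image]
  rfl

theorem exists_mem_span_sub_mem {x : A}
    (hx : Ideal.Quotient.mk I x ∈
      Submodule.span k ((fun i => Ideal.Quotient.mk I (f i)) '' s)) :
    ∃ y ∈ Submodule.span k (f '' s), x - y ∈ I := by
  rw [span_image_mk_eq_map] at hx
  obtain ⟨y, hy, hxy⟩ := hx
  exact ⟨y, hy, Ideal.Quotient.eq.mp hxy.symm⟩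

theorem sub_notMem_of_linearIndepOn_insert
    (h : LinearIndepOn k (fun i => Ideal.Quotient.mk I (f i)) (insert a s)) (has : a ∉ s)
    (hy : y ∈ Submodule.span k (f '' s)) : f a - y ∉ I := by
  intro hI
  refine ((linearIndepOn_insert has).1 h).2 ?_
  rw [span_image_mk_eq_map]
  exact ⟨y, hy, (Ideal.Quotient.eq.mpr hI).symm⟩

/-- The span of the classes of `s` modulo `J` meets the kernel of `A ⧸ J → A ⧸ I` trivially,
so the class of `f a - y` cannot lie in it. -/
theorem linearIndepOn_insert_of_sub_mem (hJI : J ≤ I)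
    (hs : LinearIndepOn k (fun i => Ideal.Quotient.mk I (f i)) s) (has : a ∉ s)
    (hy : y ∈ Submodule.span k (f '' s)) (hI : f a - y ∈ I) (hJ : f a - y ∉ J) :
    LinearIndepOn k (fun i => Ideal.Quotient.mk J (f i)) (insert a s) := by
  let π := (Ideal.Quotient.factorₐ k hJI).toLinearMap
  have hsJ : LinearIndepOn k (fun i => Ideal.Quotient.mk J (f i)) s := hs.of_comp π
  refine (linearIndepOn_insert has).2 ⟨hsJ, fun ha => hJ ?_⟩
  have hdisj :=
    Submodule.range_ker_disjoint (f := π) (v := fun i : s => Ideal.Quotient.mk J (f i)) hs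
  rw [← Set.image_eq_range (fun i => Ideal.Quotient.mk J (f i)) s] at hdisj
  rw [← Ideal.Quotient.eq_zero_iff_mem]
  refine hdisj.le_bot ⟨?_, ?_⟩
  · have hyJ : Ideal.Quotient.mk J y ∈
        Submodule.span k ((fun i => Ideal.Quotient.mk J (f i)) '' s) := by
      rw [span_image_mk_eq_map]
      exact ⟨y, hy, rfl⟩
    rw [map_sub]
    exact sub_mem ha hyJ
  · exact Ideal.Quotient.eq_zero_iff_mem.mpr hI

end QuotientSpan

section Evaluation

variable {σ : Type*}

noncomputable def evalOn (Z : Finset (σ → k)) : MvPolynomial σ k →ₐ[k] (Z → k) :=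
  AlgHom.pi fun z => aeval z.1

theorem ker_evalOn (Z : Finset (σ → k)) :
    RingHom.ker (evalOn Z) = vanishingIdeal k (Z : Set (σ → k)) := by
  ext p
  simp [evalOn, funext_iff]

theorem vanishingIdeal_singleton_injective :
    Function.Injective fun x : σ → k => vanishingIdeal k ({x} : Set (σ → k)) := by
  intro x x' h
  funext j
  have hj : X j - C (x j) ∈ vanishingIdeal k ({x'} : Set (σ → k)) :=
    (show vanishingIdeal k {x} = vanishingIdeal k {x'} from h) ▸
      (mem_vanishingIdeal_singleton_iff x _).2 (by simp)
  simpa [sub_eq_zero, eq_comm] using (mem_vanishingIdeal_singleton_iff x' _).1 hj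

theorem evalOn_surjective (Z : Finset (σ → k)) : Function.Surjective (evalOn Z) := by
  intro v
  have hcoprime :
      Pairwise (Function.onFun IsCoprime fun z : Z => vanishingIdeal k ({z.1} : Set (σ → k))) :=
    fun z z' hzz' => Ideal.isCoprime_of_isMaximal
      (vanishingIdeal_singleton_injective.ne (Subtype.coe_ne_coe.mpr hzz'))
  obtain ⟨p, hp⟩ := Ideal.exists_forall_sub_mem_ideal hcoprime fun z => C (v z)
  refine ⟨p, funext fun z => ?_⟩
  simpa [evalOn, sub_eq_zero] using (mem_vanishingIdeal_singleton_iff z.1 _).1 (hp z)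

noncomputable def quotientVanishingIdealEquiv (Z : Finset (σ → k)) :
    (MvPolynomial σ k ⧸ vanishingIdeal k (Z : Set (σ → k))) ≃ₐ[k] (Z → k) :=
  (Ideal.quotientEquivAlgOfEq k (ker_evalOn Z).symm).trans
    (Ideal.quotientKerAlgEquivOfSurjective (evalOn_surjective Z))

theorem finrank_quotient_vanishingIdeal (Z : Finset (σ → k)) :
    Module.finrank k (MvPolynomial σ k ⧸ vanishingIdeal k (Z : Set (σ → k))) = Z.card := by
  rw [(quotientVanishingIdealEquiv Z).toLinearEquiv.finrank_eq, Module.finrank_pi,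
    Fintype.card_coe]

end Evaluation

theorem supportsBasis_of_linearIndepOn {n : ℕ} {Z : Finset (Fin n → k)}
    {O : Finset (Fin n →₀ ℕ)}
    (hO : LinearIndepOn k
      (fun t => Ideal.Quotient.mk (vanishingIdeal k (Z : Set (Fin n → k))) (monomial t (1 : k)))
      (O : Set (Fin n →₀ ℕ)))
    (hcard : O.card = Z.card) :
    supportsBasis (vanishingIdeal k (Z : Set (Fin n → k))) O := by
  have : FiniteDimensional k
      (MvPolynomial (Fin n) k ⧸ vanishingIdeal k (Z : Set (Fin n → k))) :=
    (quotientVanishingIdealEquiv Z).toLinearEquiv.symm.finiteDimensional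
  refine ⟨hO, hO.linearIndependent.span_eq_top_of_card_eq_finrank' ?_⟩
  rw [finrank_quotient_vanishingIdeal, ← hcard]
  exact Fintype.card_coe O

theorem exists_point_extending_quasiOrderIdeal_general (X : Finset (Fin n → k))
    (O : Finset (Fin n →₀ ℕ))
    (hbasis : supportsBasis (MvPolynomial.vanishingIdeal k (X : Set (Fin n → k))) O)
    (i : ℕ)
    (Y : Finset (Fin n → k)) (hYcard : Y.card = i)
    (Oi : Finset (Fin n →₀ ℕ)) (hOiO : Oi ⊆ O)
    (hOicard : Oi.card = i)
    (hOibasis : supportsBasis (MvPolynomial.vanishingIdeal k (Y : Set (Fin n → k))) Oi)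
    (m : Fin n →₀ ℕ) (hm : m ∈ borderF Oi) (hmO : m ∈ O) :
    ∃ P ∈ X \ Y,
      supportsBasis
        (MvPolynomial.vanishingIdeal k ((insert P Y : Finset (Fin n → k)) : Set (Fin n → k)))
        (insert m Oi) := by
  have hmOi : m ∉ Oi := (Finset.mem_sdiff.mp hm).2
  have hmY : Ideal.Quotient.mk (vanishingIdeal k (Y : Set (Fin n → k))) (monomial m (1 : k)) ∈
      Submodule.span k ((fun t => Ideal.Quotient.mk (vanishingIdeal k (Y : Set (Fin n → k)))
        (monomial t (1 : k))) '' Oi) := by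
    rw [Set.image_eq_range]
    exact hOibasis.2 ▸ Submodule.mem_top
  obtain ⟨y, hy, hgY⟩ := exists_mem_span_sub_mem hmY
  have hOX : LinearIndepOn k
      (fun t => Ideal.Quotient.mk (vanishingIdeal k (X : Set (Fin n → k))) (monomial t (1 : k)))
      (O : Set (Fin n →₀ ℕ)) := hbasis.1
  have hgX : monomial m (1 : k) - y ∉ vanishingIdeal k (X : Set (Fin n → k)) :=
    sub_notMem_of_linearIndepOn_insert (f := fun t => monomial t (1 : k))
      (hOX.mono (Set.insert_subset hmO hOiO)) hmOi hy
  obtain ⟨P, hPX, hgP⟩ : ∃ P ∈ X, aeval P (monomial m (1 : k) - y) ≠ 0 := by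
    simpa [mem_vanishingIdeal_iff] using hgX
  have hPY : P ∉ Y := fun hPY => hgP (hgY P hPY)
  refine ⟨P, Finset.mem_sdiff.mpr ⟨hPX, hPY⟩, supportsBasis_of_linearIndepOn ?_ ?_⟩
  · rw [Finset.coe_insert m Oi]
    refine linearIndepOn_insert_of_sub_mem (f := fun t => monomial t (1 : k))
      (vanishingIdeal_anti_mono (Finset.coe_subset.mpr (Finset.subset_insert P Y)))
      hOibasis.1 hmOi hy hgY fun hg => hgP (hg P (by simp))
  · rw [Finset.card_insert_of_notMem hmOi, Finset.card_insert_of_notMem hPY, hOicard, hYcard]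

theorem exists_point_extending_quasiOrderIdeal (X : Finset (Fin n → k))
    (O : Finset (Fin n →₀ ℕ)) (hO : isQuasiOrderIdeal O)
    (hbasis : supportsBasis (MvPolynomial.vanishingIdeal k (X : Set (Fin n → k))) O)
    (i : ℕ) (hi : 1 ≤ i ∧ i ≤ X.card - 1)
    (Y : Finset (Fin n → k)) (hYX : Y ⊆ X) (hYcard : Y.card = i)
    (Oi : Finset (Fin n →₀ ℕ)) (hOiO : Oi ⊆ O) (hOi : isQuasiOrderIdeal Oi)
    (hOicard : Oi.card = i)
    (hOibasis : supportsBasis (MvPolynomial.vanishingIdeal k (Y : Set (Fin n → k))) Oi)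
    (m : Fin n →₀ ℕ) (hm : m ∈ borderF Oi) (hmO : m ∈ O) :
    ∃ P ∈ X \ Y,
      supportsBasis
        (MvPolynomial.vanishingIdeal k ((insert P Y : Finset (Fin n → k)) : Set (Fin n → k)))
        (insert m Oi) :=
  exists_point_extending_quasiOrderIdeal_general X O hbasis i Y hYcard Oi hOiO hOicard hOibasis m hm
    hmO
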